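/- arXiv:2509.21846 — 5 statements merged into one kernel-verified Lean document; each statement's English description precedes it below -/
import Mathlib

section
/- Let ρ and σ be m×m positive definite Hermitian matrices with trace 1 (density matrices). Then the relative entropy D(ρ||σ) = tr(ρ(ln ρ - ln σ)) is nonnegative, and D(ρ||σ) = 0 if ρ = σ. -/
open Real MeasureTheory Matrix Filter Finset
open scoped ComplexOrder

/-- The digamma function ψ₀ = (log ∘ Γ)ʹ. -/
noncomputable def digamma (x : ℝ) : ℝ := deriv (fun y => Real.log (Real.Gamma y)) x


/-- Logarithm of a Hermitian matrix via spectral decomposition. -/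
noncomputable def matLog {m : ℕ} {A : Matrix (Fin m) (Fin m) ℂ} (hA : A.IsHermitian) :
    Matrix (Fin m) (Fin m) ℂ :=
  (hA.eigenvectorUnitary : Matrix (Fin m) (Fin m) ℂ) *
    Matrix.diagonal (fun i => (Real.log (hA.eigenvalues i) : ℂ)) *
    star (hA.eigenvectorUnitary : Matrix (Fin m) (Fin m) ℂ)


lemma diag_trace {m : ℕ} (d e : Fin m → ℂ) (W : Matrix (Fin m) (Fin m) ℂ) :
    (diagonal d * W * diagonal e * star W).trace =
      ∑ i, ∑ j, d i * e j * (W i j * star (W i j)) := by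
  simp [Matrix.trace, Matrix.mul_apply, Matrix.diag, diagonal, Finset.mul_sum, star]
  congr 1; ext i; congr 1; ext j; ring

lemma trace_mul_matLog {m : ℕ} {ρ σ : Matrix (Fin m) (Fin m) ℂ}
    (hρ : ρ.IsHermitian) (hσ : σ.IsHermitian) :
    (ρ * matLog hσ).trace =
      ∑ i, ∑ j, (hρ.eigenvalues i : ℂ) * (Real.log (hσ.eigenvalues j) : ℂ) *
        (((star (hρ.eigenvectorUnitary : Matrix (Fin m) (Fin m) ℂ) *
            (hσ.eigenvectorUnitary : Matrix (Fin m) (Fin m) ℂ)) i j) *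
          star ((star (hρ.eigenvectorUnitary : Matrix (Fin m) (Fin m) ℂ) *
            (hσ.eigenvectorUnitary : Matrix (Fin m) (Fin m) ℂ)) i j)) := by
  set U := (hρ.eigenvectorUnitary : Matrix (Fin m) (Fin m) ℂ) with hU
  set V := (hσ.eigenvectorUnitary : Matrix (Fin m) (Fin m) ℂ) with hV
  set W := star U * V with hW
  have hUU : U * star U = 1 := Unitary.mul_star_self_of_mem (hρ.eigenvectorUnitary).2
  have hUU' : star U * U = 1 := Unitary.star_mul_self_of_mem (hρ.eigenvectorUnitary).2
  have h1 : ρ * matLog hσ =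
      U * (diagonal (fun i => (hρ.eigenvalues i : ℂ)) * W *
        diagonal (fun i => (Real.log (hσ.eigenvalues i) : ℂ)) * star W) * star U := by
    conv_lhs => rw [hρ.spectral_theorem]
    simp only [Unitary.conjStarAlgAut_apply, Unitary.coe_star, matLog, hW, Matrix.star_mul, star_star, Matrix.mul_assoc, hUU, Matrix.mul_one]
    rfl
  rw [h1, Matrix.trace_mul_cycle, hUU', Matrix.one_mul, diag_trace]

lemma trace_mul_matLog_re {m : ℕ} {ρ σ : Matrix (Fin m) (Fin m) ℂ}
    (hρ : ρ.IsHermitian) (hσ : σ.IsHermitian) :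
    ((ρ * matLog hσ).trace).re =
      ∑ i, ∑ j, hρ.eigenvalues i * Real.log (hσ.eigenvalues j) *
        Complex.normSq ((star (hρ.eigenvectorUnitary : Matrix (Fin m) (Fin m) ℂ) *
            (hσ.eigenvectorUnitary : Matrix (Fin m) (Fin m) ℂ)) i j) := by
  rw [trace_mul_matLog hρ hσ]
  simp only [Complex.star_def, Complex.mul_conj, ← Complex.ofReal_mul, ← Complex.ofReal_sum,
    Complex.ofReal_re]

theorem relativeEntropy_nonneg {m : ℕ} (ρ σ : Matrix (Fin m) (Fin m) ℂ)
    (hρ : ρ.PosDef) (hσ : σ.PosDef) (hρt : ρ.trace = 1) (hσt : σ.trace = 1) :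
    0 ≤ ((ρ * (matLog hρ.1 - matLog hσ.1)).trace).re ∧
      (ρ = σ → (ρ * (matLog hρ.1 - matLog hσ.1)).trace = 0) := by
  constructor
  · set U := (hρ.1.eigenvectorUnitary : Matrix (Fin m) (Fin m) ℂ) with hU
    set V := (hσ.1.eigenvectorUnitary : Matrix (Fin m) (Fin m) ℂ) with hV
    set W := star U * V with hW
    set p := hρ.1.eigenvalues with hp
    set q := hσ.1.eigenvalues with hq
    have hppos : ∀ i, 0 < p i := fun i => hρ.eigenvalues_pos i
    have hqpos : ∀ i, 0 < q i := fun i => hσ.eigenvalues_pos i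
    set P : Fin m → Fin m → ℝ := fun i j => Complex.normSq (W i j) with hP
    have hPnn : ∀ i j, 0 ≤ P i j := fun i j => Complex.normSq_nonneg _
    have hWU : W ∈ unitary (Matrix (Fin m) (Fin m) ℂ) :=
      mul_mem (Unitary.star_mem (hρ.1.eigenvectorUnitary).2) (hσ.1.eigenvectorUnitary).2
    have hrow : ∀ i, ∑ j, P i j = 1 := by
      intro i
      have h : (W * star W) i i = (1 : Matrix (Fin m) (Fin m) ℂ) i i := by
        rw [Unitary.mul_star_self_of_mem hWU]
      simp only [Matrix.mul_apply, Matrix.one_apply_eq, Matrix.star_apply] at h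
      have : ((∑ j, P i j : ℝ) : ℂ) = 1 := by
        rw [Complex.ofReal_sum, ← h]
        exact Finset.sum_congr rfl fun j _ => (Complex.mul_conj (W i j)).symm
      exact_mod_cast this
    have hcol : ∀ j, ∑ i, P i j = 1 := by
      intro j
      have h : (star W * W) j j = (1 : Matrix (Fin m) (Fin m) ℂ) j j := by
        rw [Unitary.star_mul_self_of_mem hWU]
      simp only [Matrix.mul_apply, Matrix.one_apply_eq, Matrix.star_apply] at h
      have : ((∑ i, P i j : ℝ) : ℂ) = 1 := by
        rw [Complex.ofReal_sum, ← h]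
        refine Finset.sum_congr rfl fun i _ => ?_
        rw [← Complex.mul_conj (W i j), Complex.star_def, mul_comm]
      exact_mod_cast this
    have hpsum : ∑ i, p i = 1 := by
      have htr : ρ.trace = ∑ i, (p i : ℂ) := by
        conv_lhs => rw [hρ.1.spectral_theorem]
        rw [Unitary.conjStarAlgAut_apply, Matrix.trace_mul_cycle, Unitary.star_mul_self_of_mem (hρ.1.eigenvectorUnitary).2,
          Matrix.one_mul, Matrix.trace_diagonal]
        rfl
      have : ((∑ i, p i : ℝ) : ℂ) = 1 := by rw [Complex.ofReal_sum, ← htr, hρt]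
      exact_mod_cast this
    have hqsum : ∑ i, q i = 1 := by
      have htr : σ.trace = ∑ i, (q i : ℂ) := by
        conv_lhs => rw [hσ.1.spectral_theorem]
        rw [Unitary.conjStarAlgAut_apply, Matrix.trace_mul_cycle, Unitary.star_mul_self_of_mem (hσ.1.eigenvectorUnitary).2,
          Matrix.one_mul, Matrix.trace_diagonal]
        rfl
      have : ((∑ i, q i : ℝ) : ℂ) = 1 := by rw [Complex.ofReal_sum, ← htr, hσt]
      exact_mod_cast this
    have hre : ((ρ * (matLog hρ.1 - matLog hσ.1)).trace).re =
        (∑ i, ∑ j, p i * Real.log (p j) * Complex.normSq ((star U * U) i j))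
          - ∑ i, ∑ j, p i * Real.log (q j) * P i j := by
      rw [Matrix.mul_sub, Matrix.trace_sub, Complex.sub_re,
        trace_mul_matLog_re hρ.1 hρ.1, trace_mul_matLog_re hρ.1 hσ.1]
    have hUU' : star U * U = 1 := Unitary.star_mul_self_of_mem (hρ.1.eigenvectorUnitary).2
    have hdiag : (∑ i, ∑ j, p i * Real.log (p j) * Complex.normSq ((star U * U) i j))
        = ∑ i, p i * Real.log (p i) := by
      rw [hUU']
      refine Finset.sum_congr rfl fun i _ => ?_
      rw [Finset.sum_eq_single i]
      · simp
      · intro j _ hji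
        simp [Matrix.one_apply, hji.symm]
      · simp
    rw [hre, hdiag]
    have step1 : ∑ i, p i * Real.log (p i) = ∑ i, ∑ j, p i * Real.log (p i) * P i j := by
      refine Finset.sum_congr rfl fun i _ => ?_
      rw [← Finset.mul_sum, hrow, mul_one]
    rw [step1, ← Finset.sum_sub_distrib]
    simp only [← Finset.sum_sub_distrib]
    have step2 : ∀ i j, (p i - q j) * P i j ≤
        p i * Real.log (p i) * P i j - p i * Real.log (q j) * P i j := by
      intro i j
      rw [← sub_mul]
      apply mul_le_mul_of_nonneg_right _ (hPnn i j)
      have hlog : Real.log (q j / p i) ≤ q j / p i - 1 :=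
        Real.log_le_sub_one_of_pos (div_pos (hqpos j) (hppos i))
      rw [Real.log_div (hqpos j).ne' (hppos i).ne'] at hlog
      have h2 := mul_le_mul_of_nonneg_left hlog (hppos i).le
      have h3 : p i * (q j / p i - 1) = q j - p i := by
        rw [mul_sub, mul_one, mul_div_cancel₀ _ (hppos i).ne']
      rw [mul_sub] at h2
      linarith
    have step3 : (0:ℝ) = ∑ i, ∑ j, (p i - q j) * P i j := by
      have : ∑ i, ∑ j, (p i - q j) * P i j
          = (∑ i, ∑ j, p i * P i j) - ∑ i, ∑ j, q j * P i j := by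
        simp [sub_mul, Finset.sum_sub_distrib]
      rw [this]
      have h1 : (∑ i, ∑ j, p i * P i j) = 1 := by
        rw [← hpsum]
        refine Finset.sum_congr rfl fun i _ => ?_
        rw [← Finset.mul_sum, hrow, mul_one]
      have h2 : (∑ i, ∑ j, q j * P i j) = 1 := by
        rw [Finset.sum_comm, ← hqsum]
        refine Finset.sum_congr rfl fun j _ => ?_
        rw [← Finset.mul_sum, hcol, mul_one]
      rw [h1, h2, sub_self]
    rw [step3]
    exact Finset.sum_le_sum fun i _ => Finset.sum_le_sum fun j _ => step2 i j
  · intro h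
    subst h
    simp [sub_self]
end

section
/- Define F(m, n₁, n₂) = ψ₀(m n₂) - ψ₀(m n₁ + 1) + ψ₀(n₁) - (1/m)(n₂ ψ₀(n₂) - (n₂-m) ψ₀(n₂-m)) + (m + 2n₁ + 1)/(2n₁). For fixed constants c₁, c₂ > 1, setting n₁ = c₁ m and n₂ = c₂ m, the limit as m → ∞ of F(m, c₁ m, c₂ m) equals (c₂ - 1) ln(1 - 1/c₂) + 1/(2c₁) + 1. -/
open Real MeasureTheory Matrix Filter Finset

section digammaAux
open Set

lemma diffLogGamma {y : ℝ} (hy : 0 < y) : DifferentiableAt ℝ (Real.log ∘ Real.Gamma) y := by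
  refine ((Real.differentiableAt_Gamma ?_).log (Real.Gamma_ne_zero ?_)) <;>
    exact fun m => ((neg_nonpos.mpr (Nat.cast_nonneg m)).trans_lt hy).ne'

lemma digamma_eq (x : ℝ) : digamma x = deriv (Real.log ∘ Real.Gamma) x := by
  simp [digamma, Function.comp_def]

lemma digamma_le_log {x : ℝ} (hx : 0 < x) : digamma x ≤ Real.log x := by
  have hc : ConvexOn ℝ (Ioi 0) (Real.log ∘ Real.Gamma) := Real.convexOn_log_Gamma
  have h := hc.deriv_le_slope (mem_Ioi.mpr hx) (mem_Ioi.mpr (by linarith : (0:ℝ) < x + 1))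
      (by linarith) (diffLogGamma hx)
  rw [digamma_eq]
  refine h.trans (le_of_eq ?_)
  rw [slope_def_field, show x + 1 - x = (1:ℝ) by ring, div_one]
  simp only [Function.comp_apply]
  rw [Real.Gamma_add_one hx.ne', Real.log_mul hx.ne' (Real.Gamma_pos_of_pos hx).ne']
  ring

lemma log_le_digamma {x : ℝ} (hx : 1 < x) : Real.log (x - 1) ≤ digamma x := by
  have hc : ConvexOn ℝ (Ioi 0) (Real.log ∘ Real.Gamma) := Real.convexOn_log_Gamma
  have hx1 : (0:ℝ) < x - 1 := by linarith
  have h := hc.slope_le_deriv (mem_Ioi.mpr hx1) (mem_Ioi.mpr (by linarith : (0:ℝ) < x))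
      (by linarith) (diffLogGamma (by linarith))
  rw [digamma_eq]
  refine le_trans (le_of_eq ?_) h
  rw [slope_def_field, show x - (x - 1) = (1:ℝ) by ring, div_one]
  simp only [Function.comp_apply]
  have h0 : Real.Gamma x = (x - 1) * Real.Gamma (x - 1) := by
    conv_lhs => rw [show x = x - 1 + 1 by ring]
    exact Real.Gamma_add_one hx1.ne'
  rw [h0, Real.log_mul hx1.ne' (Real.Gamma_pos_of_pos hx1).ne']
  ring

lemma tendsto_digamma_sub_log :
    Tendsto (fun x : ℝ => digamma x - Real.log x) atTop (nhds 0) := by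
  have hlo : Tendsto (fun x : ℝ => Real.log (x - 1) - Real.log x) atTop (nhds 0) := by
    have h2 : Tendsto (fun x : ℝ => 1 - 1 / x) atTop (nhds 1) := by
      simpa using tendsto_const_nhds.sub
        (tendsto_inv_atTop_zero.congr (fun x : ℝ => (one_div x).symm))
    have h1 : Tendsto (fun x : ℝ => (x - 1) / x) atTop (nhds 1) := by
      refine h2.congr' ?_
      filter_upwards [eventually_gt_atTop (0:ℝ)] with x hx
      field_simp
    have h3 := (Real.continuousAt_log one_ne_zero).tendsto.comp h1
    rw [Real.log_one] at h3
    refine h3.congr' ?_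
    filter_upwards [eventually_gt_atTop (1:ℝ)] with x hx
    simp only [Function.comp_apply]
    rw [Real.log_div (by linarith) (by linarith)]
  refine tendsto_of_tendsto_of_tendsto_of_le_of_le' hlo tendsto_const_nhds ?_ ?_
  · filter_upwards [eventually_gt_atTop (1:ℝ)] with x hx
    have := log_le_digamma hx
    linarith
  · filter_upwards [eventually_gt_atTop (1:ℝ)] with x hx
    have := digamma_le_log (by linarith : (0:ℝ) < x)
    linarith

theorem hs_real (c₁ c₂ : ℝ) (h₁ : 1 < c₁) (h₂ : 1 < c₂) :
    Tendsto (fun x : ℝ =>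
        digamma (x * (c₂ * x)) - digamma (x * (c₁ * x) + 1) + digamma (c₁ * x)
          - (1 / x) * ((c₂ * x) * digamma (c₂ * x) - (c₂ * x - x) * digamma (c₂ * x - x))
          + (x + 2 * (c₁ * x) + 1) / (2 * (c₁ * x)))
      atTop
      (nhds ((c₂ - 1) * Real.log (1 - 1 / c₂) + 1 / (2 * c₁) + 1)) := by
  have hc₁ : (0:ℝ) < c₁ := by linarith
  have hc₂ : (0:ℝ) < c₂ := by linarith
  have hc₂1 : (0:ℝ) < c₂ - 1 := by linarith
  set e : ℝ → ℝ := fun x => digamma x - Real.log x with he_def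
  have he : Tendsto e atTop (nhds 0) := tendsto_digamma_sub_log
  -- atTop facts
  have t1 : Tendsto (fun x : ℝ => x * (c₂ * x)) atTop atTop :=
    tendsto_id.atTop_mul_atTop₀ (tendsto_id.const_mul_atTop hc₂)
  have t2 : Tendsto (fun x : ℝ => x * (c₁ * x) + 1) atTop atTop :=
    tendsto_atTop_add_const_right _ 1 (tendsto_id.atTop_mul_atTop₀ (tendsto_id.const_mul_atTop hc₁))
  have t3 : Tendsto (fun x : ℝ => c₁ * x) atTop atTop := tendsto_id.const_mul_atTop hc₁
  have t4 : Tendsto (fun x : ℝ => c₂ * x) atTop atTop := tendsto_id.const_mul_atTop hc₂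
  have t5 : Tendsto (fun x : ℝ => c₂ * x - x) atTop atTop := by
    refine (tendsto_id.const_mul_atTop hc₂1 : Tendsto (fun x : ℝ => (c₂ - 1) * x) atTop atTop).congr
      (fun x => by ring)
  -- error terms
  have E1 := he.comp t1
  have E2 := he.comp t2
  have E3 := he.comp t3
  have E4 := he.comp t4
  have E5 := he.comp t5
  -- main explicit part
  have hlb : Tendsto (fun x : ℝ => Real.log (1 + 1 / (c₁ * x ^ 2))) atTop (nhds 0) := by
    have hq : Tendsto (fun x : ℝ => 1 + 1 / (c₁ * x ^ 2)) atTop (nhds 1) := by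
      have : Tendsto (fun x : ℝ => c₁ * x ^ 2) atTop atTop :=
        (tendsto_pow_atTop (two_ne_zero)).const_mul_atTop hc₁
      simpa using tendsto_const_nhds.add (this.inv_tendsto_atTop.congr
        (fun x => (one_div (c₁ * x ^ 2)).symm))
    have h3 := (Real.continuousAt_log one_ne_zero).tendsto.comp hq
    simpa [Function.comp_def] using h3
  have hrat : Tendsto (fun x : ℝ => 1 / (2 * c₁ * x)) atTop (nhds 0) := by
    have : Tendsto (fun x : ℝ => 2 * c₁ * x) atTop atTop :=
      tendsto_id.const_mul_atTop (by linarith)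
    simpa using this.inv_tendsto_atTop.congr (fun x => (one_div _).symm)
  -- the combined limit
  have H : Tendsto (fun x : ℝ =>
      e (x * (c₂ * x)) - e (x * (c₁ * x) + 1) + e (c₁ * x)
        - (c₂ * e (c₂ * x) - (c₂ - 1) * e (c₂ * x - x))
        + ((c₂ - 1) * Real.log (1 - 1 / c₂) - Real.log (1 + 1 / (c₁ * x ^ 2))
            + (1 + 2 * c₁) / (2 * c₁) + 1 / (2 * c₁ * x)))
      atTop (nhds ((c₂ - 1) * Real.log (1 - 1 / c₂) + 1 / (2 * c₁) + 1)) := by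
    have Hc1 : Tendsto (fun _ : ℝ => (c₂ - 1) * Real.log (1 - 1 / c₂)) atTop
        (nhds ((c₂ - 1) * Real.log (1 - 1 / c₂))) := tendsto_const_nhds
    have Hc2 : Tendsto (fun _ : ℝ => (1 + 2 * c₁) / (2 * c₁)) atTop
        (nhds ((1 + 2 * c₁) / (2 * c₁))) := tendsto_const_nhds
    have := ((((E1.sub E2).add E3).sub
        ((E4.const_mul c₂).sub (E5.const_mul (c₂ - 1)))).add
        (((Hc1.sub hlb).add Hc2).add hrat))
    convert this using 2
    · rfl
    field_simp
    ring
  refine H.congr' ?_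
  filter_upwards [eventually_gt_atTop (1:ℝ)] with x hx
  have hx0 : (0:ℝ) < x := by linarith
  have hxx : x ≠ 0 := hx0.ne'
  have hkey : x * (c₁ * x) + 1 = (x * (c₁ * x)) * (1 + 1 / (c₁ * x ^ 2)) := by
    field_simp
  have l1 : Real.log (x * (c₂ * x)) = Real.log x + (Real.log c₂ + Real.log x) := by
    rw [Real.log_mul hxx (by positivity), Real.log_mul hc₂.ne' hxx]
  have l2 : Real.log (x * (c₁ * x) + 1)
      = (Real.log x + (Real.log c₁ + Real.log x)) + Real.log (1 + 1 / (c₁ * x ^ 2)) := by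
    rw [hkey, Real.log_mul (by positivity) (by positivity),
      Real.log_mul hxx (by positivity), Real.log_mul hc₁.ne' hxx]
  have l3 : Real.log (c₁ * x) = Real.log c₁ + Real.log x := Real.log_mul hc₁.ne' hxx
  have l4 : Real.log (c₂ * x) = Real.log c₂ + Real.log x := Real.log_mul hc₂.ne' hxx
  have l5 : Real.log (c₂ * x - x) = Real.log (c₂ - 1) + Real.log x := by
    rw [show c₂ * x - x = (c₂ - 1) * x by ring, Real.log_mul hc₂1.ne' hxx]
  have la : Real.log (1 - 1 / c₂) = Real.log (c₂ - 1) - Real.log c₂ := by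
    rw [show (1 : ℝ) - 1 / c₂ = (c₂ - 1) / c₂ by field_simp, Real.log_div hc₂1.ne' hc₂.ne']
  simp only [he_def]
  rw [l1, l2, l3, l4, l5, la]
  field_simp
  ring

theorem hs_relative_entropy_limit (c₁ c₂ : ℝ) (h₁ : 1 < c₁) (h₂ : 1 < c₂) :
    Tendsto (fun m : ℕ =>
        digamma (m * (c₂ * m)) - digamma (m * (c₁ * m) + 1) + digamma (c₁ * m)
          - (1 / m) * ((c₂ * m) * digamma (c₂ * m) - (c₂ * m - m) * digamma (c₂ * m - m))
          + (m + 2 * (c₁ * m) + 1) / (2 * (c₁ * m)))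
      atTop
      (nhds ((c₂ - 1) * Real.log (1 - 1 / c₂) + 1 / (2 * c₁) + 1)) := by
  exact (hs_real c₁ c₂ h₁ h₂).comp tendsto_natCast_atTop_atTop

end digammaAux
end

section
/- For all real c₁ ≥ 1 and c₂ > 1, the quantity (c₂ - 1) ln(1 - 1/c₂) + 1/(2c₁) + 1 is strictly positive, and it is strictly decreasing in c₁ and strictly decreasing in c₂. -/
open Real Set

lemma hs_aux_log_lower {c : ℝ} (hc : 1 < c) : -1 < (c - 1) * Real.log (1 - 1 / c) := by
  have hc0 : 0 < c := lt_trans one_pos hc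
  have hy : 0 < 1 - 1 / c := by
    have : 1 / c < 1 := by
      rw [div_lt_one hc0]; exact hc
    linarith
  have hne : (1 - 1 / c) ≠ 1 := by
    have : 1 / c ≠ 0 := by positivity
    intro h; apply this; linarith
  have hinv : Real.log (1 - 1 / c)⁻¹ < (1 - 1 / c)⁻¹ - 1 :=
    Real.log_lt_sub_one_of_pos (by positivity) (by
      simp only [ne_eq, inv_eq_one]; exact hne)
  rw [Real.log_inv] at hinv
  have hlog : 1 - (1 - 1 / c)⁻¹ < Real.log (1 - 1 / c) := by linarith
  have hval : 1 - (1 - 1 / c)⁻¹ = -(1 / (c - 1)) := by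
    have hc1 : c - 1 ≠ 0 := by intro h; linarith
    field_simp
    ring
  have h1 : -(1 / (c - 1)) < Real.log (1 - 1 / c) := hval ▸ hlog
  have hc1 : 0 < c - 1 := by linarith
  calc -1 = (c - 1) * (-(1 / (c - 1))) := by field_simp
    _ < (c - 1) * Real.log (1 - 1 / c) := by
        exact (mul_lt_mul_iff_right₀ hc1).mpr h1

lemma hs_aux_deriv {c₁ : ℝ} :
    ∀ x ∈ Set.Ioi (1:ℝ), HasDerivAt
      (fun c₂ : ℝ => (c₂ - 1) * Real.log (1 - 1 / c₂) + 1 / (2 * c₁) + 1)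
      (Real.log (1 - 1 / x) + 1 / x) x := by
  intro x hx
  have hx1 : 1 < x := hx
  have hx0 : (0:ℝ) < x := lt_trans one_pos hx1
  have hxne : x ≠ 0 := ne_of_gt hx0
  have hy : 0 < 1 - 1 / x := by
    have : 1 / x < 1 := by rw [div_lt_one hx0]; exact hx1
    linarith
  have h1 : HasDerivAt (fun c : ℝ => 1 - 1 / c) ((x ^ 2)⁻¹) x := by
    have := (hasDerivAt_inv hxne).const_sub 1
    simpa [one_div] using this
  have h2 : HasDerivAt (fun c : ℝ => Real.log (1 - 1 / c))
      ((x ^ 2)⁻¹ / (1 - 1 / x)) x := h1.log (ne_of_gt hy)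
  have h3 : HasDerivAt (fun c : ℝ => c - 1) 1 x := (hasDerivAt_id x).sub_const 1
  have h4 := (h3.mul h2).add_const (1 / (2 * c₁))
  have h5 := h4.add_const 1
  refine h5.congr_deriv (Eq.symm ?_)
  have hx1' : x - 1 ≠ 0 := by intro h; linarith
  field_simp

theorem hs_limit_pos_and_monotone :
    (∀ c₁ c₂ : ℝ, 1 ≤ c₁ → 1 < c₂ →
        0 < (c₂ - 1) * Real.log (1 - 1 / c₂) + 1 / (2 * c₁) + 1) ∧
    (∀ c₂ : ℝ, 1 < c₂ →
        StrictAntiOn (fun c₁ : ℝ => (c₂ - 1) * Real.log (1 - 1 / c₂) + 1 / (2 * c₁) + 1)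
          (Set.Ici 1)) ∧
    (∀ c₁ : ℝ, 1 ≤ c₁ →
        StrictAntiOn (fun c₂ : ℝ => (c₂ - 1) * Real.log (1 - 1 / c₂) + 1 / (2 * c₁) + 1)
          (Set.Ioi 1)) := by
  refine ⟨?_, ?_, ?_⟩
  · intro c₁ c₂ hc₁ hc₂
    have h := hs_aux_log_lower hc₂
    have : 0 < 1 / (2 * c₁) := by positivity
    linarith
  · intro c₂ hc₂ a ha b hb hab
    have ha' : (0:ℝ) < a := lt_of_lt_of_le one_pos ha
    have h : 1 / (2 * b) < 1 / (2 * a) :=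
      one_div_lt_one_div_of_lt (by linarith) (by linarith)
    simp only
    linarith
  · intro c₁ _
    apply strictAntiOn_of_deriv_neg (convex_Ioi 1)
    · exact fun x hx => ((hs_aux_deriv x hx).continuousAt).continuousWithinAt
    · intro x hx
      rw [interior_Ioi] at hx
      rw [(hs_aux_deriv x hx).deriv]
      have hx1 : 1 < x := hx
      have hx0 : (0:ℝ) < x := lt_trans one_pos hx1
      have hy : 0 < 1 - 1 / x := by
        have : 1 / x < 1 := by rw [div_lt_one hx0]; exact hx1
        linarith
      have hne : (1 - 1 / x) ≠ 1 := by
        have : 1 / x ≠ 0 := by positivity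
        intro h; apply this; linarith
      have := Real.log_lt_sub_one_of_pos hy hne
      linarith
end

section
/- Define G(c₁, c₂) = ln c₁ - (c₂ - 1) ln c₂ - ln(c₁ - 1/2) + (c₂ - 1) ln(c₂ - 1) + 1 for c₁ ≥ 1 and c₂ > 1. Then G(c₁, c₂) > 0, G is strictly decreasing in c₁, and G is strictly decreasing in c₂. -/
open Real Set

theorem bh_hs_limit_pos_and_monotone :
    (∀ c₁ c₂ : ℝ, 1 ≤ c₁ → 1 < c₂ →
        0 < Real.log c₁ - (c₂ - 1) * Real.log c₂ - Real.log (c₁ - 1 / 2)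
            + (c₂ - 1) * Real.log (c₂ - 1) + 1) ∧
    (∀ c₂ : ℝ, 1 < c₂ →
        StrictAntiOn (fun c₁ : ℝ => Real.log c₁ - (c₂ - 1) * Real.log c₂
            - Real.log (c₁ - 1 / 2) + (c₂ - 1) * Real.log (c₂ - 1) + 1) (Set.Ici 1)) ∧
    (∀ c₁ : ℝ, 1 ≤ c₁ →
        StrictAntiOn (fun c₂ : ℝ => Real.log c₁ - (c₂ - 1) * Real.log c₂
            - Real.log (c₁ - 1 / 2) + (c₂ - 1) * Real.log (c₂ - 1) + 1) (Set.Ioi 1)) := by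
  refine ⟨?_, ?_, ?_⟩
  · intro c₁ c₂ h1 h2
    have hc1 : (0:ℝ) < c₁ - 1/2 := by linarith
    have hA : Real.log (c₁ - 1/2) < Real.log c₁ := Real.log_lt_log hc1 (by linarith)
    have hc2 : (0:ℝ) < c₂ - 1 := by linarith
    have hc2' : (0:ℝ) < c₂ := by linarith
    have hgt : 1 < c₂ / (c₂ - 1) := (one_lt_div hc2).mpr (by linarith)
    have hkey : Real.log (c₂ / (c₂ - 1)) < c₂ / (c₂ - 1) - 1 :=
      Real.log_lt_sub_one_of_pos (by positivity) hgt.ne'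
    rw [Real.log_div hc2'.ne' hc2.ne'] at hkey
    have hdiv : c₂ / (c₂ - 1) - 1 = 1 / (c₂ - 1) := by field_simp; ring
    rw [hdiv] at hkey
    have hprod : (c₂ - 1) * (Real.log c₂ - Real.log (c₂ - 1)) < 1 := by
      have := (mul_lt_mul_of_pos_left hkey hc2)
      calc (c₂ - 1) * (Real.log c₂ - Real.log (c₂ - 1))
          < (c₂ - 1) * (1 / (c₂ - 1)) := mul_lt_mul_of_pos_left hkey hc2
        _ = 1 := by field_simp
    nlinarith [hprod, hA]
  · intro c₂ _ a ha b hb hab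
    simp only [Set.mem_Ici] at ha hb
    have ha0 : (0:ℝ) < a := by linarith
    have hb0 : (0:ℝ) < b := by linarith
    have ha2 : (0:ℝ) < a - 1/2 := by linarith
    have hb2 : (0:ℝ) < b - 1/2 := by linarith
    have hlt : b * (a - 1/2) < a * (b - 1/2) := by nlinarith
    have h := Real.log_lt_log (by positivity) hlt
    rw [Real.log_mul hb0.ne' ha2.ne', Real.log_mul ha0.ne' hb2.ne'] at h
    simp only
    linarith
  · intro c₁ h1
    have hf : ∀ x ∈ Set.Ioi (1:ℝ),
        HasDerivAt (fun c₂ : ℝ => Real.log c₁ - (c₂ - 1) * Real.log c₂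
            - Real.log (c₁ - 1 / 2) + (c₂ - 1) * Real.log (c₂ - 1) + 1)
          (Real.log (x - 1) - Real.log x + 1 / x) x := by
      intro x hx
      simp only [Set.mem_Ioi] at hx
      have hx0 : (0:ℝ) < x := by linarith
      have hx1 : (0:ℝ) < x - 1 := by linarith
      have d1 : HasDerivAt (fun c : ℝ => (c - 1) * Real.log c)
          (Real.log x + (x - 1) * x⁻¹) x := by
        have := ((hasDerivAt_id x).sub_const 1).mul (Real.hasDerivAt_log hx0.ne')
        simp at this; exact this
      have hl : HasDerivAt (fun c : ℝ => Real.log (c - 1)) (x - 1)⁻¹ x := by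
        have := (Real.hasDerivAt_log hx1.ne').comp x ((hasDerivAt_id x).sub_const 1)
        simp at this; exact this
      have d2 : HasDerivAt (fun c : ℝ => (c - 1) * Real.log (c - 1))
          (Real.log (x - 1) + 1) x := by
        have := ((hasDerivAt_id x).sub_const 1).mul hl
        refine this.congr_deriv ?_
        simp only [id, one_mul, mul_inv_cancel₀ hx1.ne']
      have := ((((hasDerivAt_const x (Real.log c₁)).sub d1).sub_const
          (Real.log (c₁ - 1/2))).add d2).add_const 1
      refine this.congr_deriv ?_
      field_simp
      ring
    have hneg : ∀ x ∈ Set.Ioi (1:ℝ), Real.log (x - 1) - Real.log x + 1 / x < 0 := by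
      intro x hx
      simp only [Set.mem_Ioi] at hx
      have hx0 : (0:ℝ) < x := by linarith
      have hx1 : (0:ℝ) < x - 1 := by linarith
      have hlt1 : (x - 1) / x < 1 := (div_lt_one hx0).mpr (by linarith)
      have hkey : Real.log ((x - 1) / x) < (x - 1) / x - 1 :=
        Real.log_lt_sub_one_of_pos (by positivity) hlt1.ne
      rw [Real.log_div hx1.ne' hx0.ne'] at hkey
      have : (x - 1) / x - 1 = -(1 / x) := by field_simp; ring
      rw [this] at hkey
      linarith
    exact strictAntiOn_of_deriv_neg (convex_Ioi 1)
      (fun x hx => (hf x hx).continuousAt.continuousWithinAt)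
      (fun x hx => by
        rw [(hf x (by simpa using hx)).deriv]
        exact hneg x (by simpa using hx))
end

section
/- Define H(c₁, c₂) = ln c₁ + c₂ ln c₂ - ln(c₁ - 1/2) - (4c₂ - 3) ln(c₂ - 1/2) + 3(c₂ - 1) ln(c₂ - 1) + 1 for c₁ ≥ 1 and c₂ > 1. Then H(c₁, c₂) > 0 and H is strictly decreasing in c₁. -/
open Real Set

lemma bh_aux_pos (c₂ : ℝ) (h : 1 < c₂) :
    0 < c₂ * Real.log c₂ - (4 * c₂ - 3) * Real.log (c₂ - 1 / 2)
        + 3 * (c₂ - 1) * Real.log (c₂ - 1) + 1 := by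
  have h34 : (0:ℝ) < c₂ - 3 / 4 := by linarith
  have h12 : (0:ℝ) < c₂ - 1 / 2 := by linarith
  have h1 : (0:ℝ) < c₂ - 1 := by linarith
  have hc : (0:ℝ) < c₂ := by linarith
  -- convexity of x * log x
  have hconv := Real.convexOn_mul_log.2 (x := c₂) (y := c₂ - 1)
    (le_of_lt hc) (le_of_lt h1) (by norm_num : (0:ℝ) ≤ 1/4) (by norm_num : (0:ℝ) ≤ 3/4)
    (by norm_num)
  have hmean : (1/4 : ℝ) • c₂ + (3/4 : ℝ) • (c₂ - 1) = c₂ - 3/4 := by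
    simp [smul_eq_mul]; ring
  rw [hmean] at hconv
  simp only [smul_eq_mul] at hconv
  -- hconv : (c₂ - 3/4) * log (c₂ - 3/4) ≤ 1/4 * (c₂ * log c₂) + 3/4 * ((c₂-1) * log (c₂-1))
  -- log bound : log s < s - 1 for s = (c₂-1/2)/(c₂-3/4) > 1
  have hs : (c₂ - 1/2) / (c₂ - 3/4) ≠ 1 := by
    intro he
    have := (div_eq_one_iff_eq (ne_of_gt h34)).1 he
    linarith
  have hlog := Real.log_lt_sub_one_of_pos (by positivity) hs
  rw [Real.log_div (ne_of_gt h12) (ne_of_gt h34)] at hlog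
  -- hlog : log (c₂-1/2) - log (c₂-3/4) < (c₂-1/2)/(c₂-3/4) - 1
  have hdiv : (c₂ - 1/2) / (c₂ - 3/4) - 1 = (1/4) / (c₂ - 3/4) := by
    rw [div_sub_one (ne_of_gt h34)]
    congr 1; ring
  rw [hdiv] at hlog
  have h43 : (0:ℝ) < 4 * c₂ - 3 := by linarith
  have key : (4 * c₂ - 3) * (Real.log (c₂ - 1/2) - Real.log (c₂ - 3/4)) < 1 := by
    have h2 : (4 * c₂ - 3) * (Real.log (c₂ - 1/2) - Real.log (c₂ - 3/4))
        < (4 * c₂ - 3) * ((1/4) / (c₂ - 3/4)) := by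
      exact mul_lt_mul_of_pos_left hlog h43
    have h3 : (4 * c₂ - 3) * ((1/4) / (c₂ - 3/4)) = 1 := by
      have he : (1/4:ℝ) / (c₂ - 3/4) = 1 / (4*c₂ - 3) := by
        rw [div_eq_div_iff (ne_of_gt h34) (ne_of_gt h43)]; ring
      rw [he, mul_one_div, div_self (ne_of_gt h43)]
    linarith
  nlinarith [hconv]

theorem bh_limit_pos_and_monotone :
    (∀ c₁ c₂ : ℝ, 1 ≤ c₁ → 1 < c₂ →
        0 < Real.log c₁ + c₂ * Real.log c₂ - Real.log (c₁ - 1 / 2)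
            - (4 * c₂ - 3) * Real.log (c₂ - 1 / 2) + 3 * (c₂ - 1) * Real.log (c₂ - 1) + 1) ∧
    (∀ c₂ : ℝ, 1 < c₂ →
        StrictAntiOn (fun c₁ : ℝ => Real.log c₁ + c₂ * Real.log c₂ - Real.log (c₁ - 1 / 2)
            - (4 * c₂ - 3) * Real.log (c₂ - 1 / 2) + 3 * (c₂ - 1) * Real.log (c₂ - 1) + 1)
          (Set.Ici 1)) := by
  constructor
  · intro c₁ c₂ h1 h2
    have hp := bh_aux_pos c₂ h2
    have hlog : Real.log (c₁ - 1 / 2) < Real.log c₁ :=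
      Real.log_lt_log (by linarith) (by linarith)
    linarith
  · intro c₂ h2 a ha b hb hab
    simp only [Set.mem_Ici] at ha hb
    simp only
    have h1 : Real.log (b * (a - 1/2)) < Real.log (a * (b - 1/2)) := by
      apply Real.log_lt_log
      · nlinarith
      · nlinarith
    rw [Real.log_mul (by linarith) (by linarith),
        Real.log_mul (by linarith) (by linarith)] at h1
    linarith
end
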